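/- Let F be a field of odd characteristic and let x, y, x', y' ∈ F² with d(x,y) = d(x',y') ≠ 0. Then there exists exactly one orientation-preserving rigid motion g (composition of a rotation in SO₂(F) and a translation) such that g(x) = x' and g(y) = y'. -/

import Mathlib

/-!
A rigid motion `z ↦ R z + t` sends `x, y` to `x', y'` exactly when `R (x - y) = x' - y'` and
`t = x' - R x`, so everything reduces to the linear part. The rotation `!![u, -v; v, u]` acts on
`w = x - y` as multiplication by `u + i v`; solving `R w = w'` for `(u, v)` is a linear system of
determinant `d(x, y) ≠ 0`, and its unique solution satisfies `u² + v² = 1` because `w` and `w'`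
have the same squared length.
-/

open Matrix

section AffineMaps

variable {R m n : Type*} [Ring R] [Fintype n]

theorem mulVec_add_eq_and_mulVec_add_eq_iff (A : Matrix m n R) (t : m → R) (x y : n → R)
    (x' y' : m → R) :
    (A *ᵥ x + t = x' ∧ A *ᵥ y + t = y') ↔ A *ᵥ (x - y) = x' - y' ∧ t = x' - A *ᵥ x := by
  rw [mulVec_sub]
  constructor
  · rintro ⟨rfl, rfl⟩
    constructor <;> abel
  · rintro ⟨h, rfl⟩
    exact ⟨by abel, by linear_combination (norm := module) -h⟩

theorem existsUnique_affine_of_existsUnique_linear (P : Matrix m n R → Prop) {x y : n → R}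
    {x' y' : m → R} (h : ∃! A, P A ∧ A *ᵥ (x - y) = x' - y') :
    ∃! g : Matrix m n R × (m → R), P g.1 ∧ g.1 *ᵥ x + g.2 = x' ∧ g.1 *ᵥ y + g.2 = y' := by
  simp_rw [mulVec_add_eq_and_mulVec_add_eq_iff]
  obtain ⟨A, ⟨hPA, hA⟩, hA_unique⟩ := h
  refine ⟨(A, x' - A *ᵥ x), ⟨hPA, hA, rfl⟩, ?_⟩
  rintro ⟨B, t⟩ ⟨hPB, hB, ht⟩
  obtain rfl := hA_unique B ⟨hPB, hB⟩
  exact Prod.ext rfl ht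

end AffineMaps

section Rotations

variable {F : Type*} [Field F]

theorem rotation_mulVec (u v : F) (z : Fin 2 → F) :
    !![u, -v; v, u] *ᵥ z = ![u * z 0 - v * z 1, v * z 0 + u * z 1] := by
  ext i
  fin_cases i <;> simp [mulVec, dotProduct, Fin.sum_univ_two]; ring

theorem rotation_mulVec_eq_iff {w w' : Fin 2 → F} (hw : w 0 ^ 2 + w 1 ^ 2 ≠ 0) (u v : F) :
    !![u, -v; v, u] *ᵥ w = w' ↔
      u = (w 0 * w' 0 + w 1 * w' 1) / (w 0 ^ 2 + w 1 ^ 2) ∧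
        v = (w 0 * w' 1 - w 1 * w' 0) / (w 0 ^ 2 + w 1 ^ 2) := by
  rw [rotation_mulVec, funext_iff, Fin.forall_fin_two]
  simp only [cons_val_zero, cons_val_one, eq_div_iff hw]
  constructor
  · rintro ⟨h0, h1⟩
    constructor
    · linear_combination w 0 * h0 + w 1 * h1
    · linear_combination w 0 * h1 - w 1 * h0
  · rintro ⟨hu, hv⟩
    constructor <;> refine mul_right_cancel₀ hw ?_
    · linear_combination w 0 * hu - w 1 * hv
    · linear_combination w 1 * hu + w 0 * hv

theorem existsUnique_rotation_mulVec_eq {w w' : Fin 2 → F}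
    (h_eq : w 0 ^ 2 + w 1 ^ 2 = w' 0 ^ 2 + w' 1 ^ 2) (hw : w 0 ^ 2 + w 1 ^ 2 ≠ 0) :
    ∃! A : Matrix (Fin 2) (Fin 2) F,
      (∃ u v : F, u ^ 2 + v ^ 2 = 1 ∧ A = !![u, -v; v, u]) ∧ A *ᵥ w = w' := by
  set u := (w 0 * w' 0 + w 1 * w' 1) / (w 0 ^ 2 + w 1 ^ 2)
  set v := (w 0 * w' 1 - w 1 * w' 0) / (w 0 ^ 2 + w 1 ^ 2)
  have huv : u ^ 2 + v ^ 2 = 1 := by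
    simp only [u, v]
    field_simp
    linear_combination (-(w 0 ^ 2 + w 1 ^ 2)) * h_eq
  refine ⟨!![u, -v; v, u], ⟨⟨u, v, huv, rfl⟩, (rotation_mulVec_eq_iff hw u v).2 ⟨rfl, rfl⟩⟩, ?_⟩
  rintro _ ⟨⟨u', v', -, rfl⟩, h⟩
  obtain ⟨rfl, rfl⟩ := (rotation_mulVec_eq_iff hw u' v').1 h
  rfl

end Rotations

theorem unique_rigid_motion_general (F : Type*) [Field F]
    (x y x' y' : Fin 2 → F)
    (hd : (x 0 - y 0) ^ 2 + (x 1 - y 1) ^ 2 = (x' 0 - y' 0) ^ 2 + (x' 1 - y' 1) ^ 2)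
    (hne : (x 0 - y 0) ^ 2 + (x 1 - y 1) ^ 2 ≠ 0) :
    ∃! g : Matrix (Fin 2) (Fin 2) F × (Fin 2 → F),
      (∃ u v : F, u ^ 2 + v ^ 2 = 1 ∧ g.1 = !![u, -v; v, u]) ∧
      g.1.mulVec x + g.2 = x' ∧ g.1.mulVec y + g.2 = y' :=
  existsUnique_affine_of_existsUnique_linear _
    (existsUnique_rotation_mulVec_eq (w := x - y) (w' := x' - y') hd hne)

theorem unique_rigid_motion (F : Type*) [Field F] (hchar : (2 : F) ≠ 0)
    (x y x' y' : Fin 2 → F)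
    (hd : (x 0 - y 0) ^ 2 + (x 1 - y 1) ^ 2 = (x' 0 - y' 0) ^ 2 + (x' 1 - y' 1) ^ 2)
    (hne : (x 0 - y 0) ^ 2 + (x 1 - y 1) ^ 2 ≠ 0) :
    ∃! g : Matrix (Fin 2) (Fin 2) F × (Fin 2 → F),
      (∃ u v : F, u ^ 2 + v ^ 2 = 1 ∧ g.1 = !![u, -v; v, u]) ∧
      g.1.mulVec x + g.2 = x' ∧ g.1.mulVec y + g.2 = y' :=
  unique_rigid_motion_general F x y x' y' hd hne
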